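/- arXiv:2601.19659 — 2 statements merged into one kernel-verified Lean document; each statement's English description precedes it below -/
import Mathlib

section
/- Let W_p ∈ ℝ^{d × p} and M ∈ ℝ^{d × k} satisfy W_pᵀ·W_p = I_p, Mᵀ·M = I_k, and W_pᵀ·M = 0. Let G ∈ ℝ^{d × n}, define Ĝ = G − W_p·W_pᵀ·G − M·Mᵀ·G, and let λ₁ ≥ λ₂ ≥ … ≥ λ_d be the eigenvalues of the real symmetric positive semidefinite matrix Ĝ·Ĝᵀ (counted with multiplicity). Then for every A ∈ ℝ^{d × r} with Aᵀ·A = I_r, W_pᵀ·A = 0, and Mᵀ·A = 0, one has ‖G − A·Aᵀ·G‖_F² ≥ ‖G‖_F² − (λ₁ + λ₂ + … + λ_r). -/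
open Matrix

lemma keeplora_sum_aux {d r : ℕ} (hr : r ≤ d) (lam : Fin d → ℝ) (hsort : Antitone lam)
    (s : Fin d → ℝ) (h0 : ∀ i, 0 ≤ s i) (h1 : ∀ i, s i ≤ 1)
    (hs : ∑ i, s i = (r : ℝ)) :
    ∑ i, lam i * s i ≤ ∑ j : Fin r, lam (Fin.castLE hr j) := by
  rcases Nat.eq_zero_or_pos r with h | hpos
  · subst h
    have hz : ∀ i ∈ Finset.univ, s i = 0 :=
      (Finset.sum_eq_zero_iff_of_nonneg (fun i _ => h0 i)).mp (by simpa using hs)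
    have : ∑ i, lam i * s i = 0 := Finset.sum_eq_zero (fun i hi => by
      rw [hz i hi, mul_zero])
    simp [this]
  · have hrd : r - 1 < d := by omega
    set t := lam ⟨r - 1, hrd⟩ with ht
    have step1 : ∀ i : Fin d, lam i * s i ≤ t * s i + max (lam i - t) 0 := by
      intro i
      rcases le_or_gt t (lam i) with h | h
      · have : max (lam i - t) 0 = lam i - t := max_eq_left (by linarith)
        rw [this]
        nlinarith [h1 i, h0 i]
      · have : max (lam i - t) 0 = 0 := max_eq_right (by linarith)
        rw [this]
        nlinarith [h0 i]
    have hmax : ∀ i : Fin d, max (lam i - t) 0 =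
        if (i : ℕ) < r then lam i - t else 0 := by
      intro i
      split_ifs with h
      · have : lam i ≥ t := hsort (show i ≤ (⟨r - 1, hrd⟩ : Fin d) by
          simp [Fin.le_def]; omega)
        exact max_eq_left (by linarith)
      · have : lam i ≤ t := hsort (show (⟨r - 1, hrd⟩ : Fin d) ≤ i by
          simp [Fin.le_def]; omega)
        exact max_eq_right (by linarith)
    set F : ℕ → ℝ := fun j => if h : j < d then lam ⟨j, h⟩ - t else 0 with hF
    have hsum1 : ∑ i : Fin d, max (lam i - t) 0
        = ∑ j ∈ Finset.range r, F j := by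
      calc ∑ i : Fin d, max (lam i - t) 0
          = ∑ i : Fin d, (fun j : ℕ => if j < r then F j else 0) (i : ℕ) := by
            refine Finset.sum_congr rfl (fun i _ => ?_)
            rw [hmax i]
            simp only [hF, i.isLt, dif_pos]
        _ = ∑ j ∈ Finset.range d, (if j < r then F j else 0) := by
            simpa using Fin.sum_univ_eq_sum_range (fun j : ℕ => if j < r then F j else 0) d
        _ = ∑ j ∈ Finset.range d ∩ Finset.range r, F j := by
            rw [← Finset.sum_ite_mem]
            simp
        _ = ∑ j ∈ Finset.range r, F j := by
            congr 1
            ext j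
            simp
            omega
    have hsum2 : ∑ j : Fin r, lam (Fin.castLE hr j)
        = ∑ j ∈ Finset.range r, F j + t * r := by
      have : ∑ j : Fin r, lam (Fin.castLE hr j) = ∑ j : Fin r, (F (j : ℕ) + t) := by
        refine Finset.sum_congr rfl (fun j _ => ?_)
        have hj : (j : ℕ) < d := lt_of_lt_of_le j.isLt hr
        simp only [hF, hj, dif_pos]
        simp [Fin.castLE]
      rw [this, Finset.sum_add_distrib]
      have : ∑ j : Fin r, F (j : ℕ) = ∑ j ∈ Finset.range r, F j := by
        simpa using Fin.sum_univ_eq_sum_range F r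
      rw [this]
      simp [mul_comm]
    calc ∑ i, lam i * s i
        ≤ ∑ i, (t * s i + max (lam i - t) 0) := Finset.sum_le_sum (fun i _ => step1 i)
      _ = t * (∑ i, s i) + ∑ i, max (lam i - t) 0 := by
          rw [Finset.sum_add_distrib, Finset.mul_sum]
      _ = ∑ j ∈ Finset.range r, F j + t * r := by rw [hs, hsum1]; ring
      _ = ∑ j : Fin r, lam (Fin.castLE hr j) := hsum2.symm

/-- Quantitative lower bound of Proposition 2: under the orthonormality hypotheses on
`W_p`, `M` and the constraints `Aᵀ·A = I`, `W_pᵀ·A = 0`, `Mᵀ·A = 0`, with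
`Ĝ = G − W_p·W_pᵀ·G − M·Mᵀ·G` and `lam 0 ≥ lam 1 ≥ …` the eigenvalues of `Ĝ·Ĝᵀ`
(counted with multiplicity, i.e. `Ĝ·Ĝᵀ = Q * diagonal lam * Qᵀ` for orthogonal `Q`),
one has `‖G − A·Aᵀ·G‖_F² ≥ ‖G‖_F² − (lam 0 + ⋯ + lam (r-1))`
(writing `‖X‖_F² = trace (Xᵀ * X)`). -/
theorem keeplora_residual_lower_bound {d p k n r : ℕ} (hr : r ≤ d)
    (Wp : Matrix (Fin d) (Fin p) ℝ)
    (M : Matrix (Fin d) (Fin k) ℝ)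
    (hWp : Wpᵀ * Wp = 1) (hM : Mᵀ * M = 1) (hWM : Wpᵀ * M = 0)
    (G : Matrix (Fin d) (Fin n) ℝ)
    (Ghat : Matrix (Fin d) (Fin n) ℝ)
    (hGhat : Ghat = G - Wp * (Wpᵀ * G) - M * (Mᵀ * G))
    (lam : Fin d → ℝ) (hsort : Antitone lam)
    (Q : Matrix (Fin d) (Fin d) ℝ) (hQ : Qᵀ * Q = 1)
    (hspec : Ghat * Ghatᵀ = Q * Matrix.diagonal lam * Qᵀ)
    (A : Matrix (Fin d) (Fin r) ℝ) (hA : Aᵀ * A = 1)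
    (hWA : Wpᵀ * A = 0) (hMA : Mᵀ * A = 0) :
    Matrix.trace (Gᵀ * G) - (∑ j : Fin r, lam (Fin.castLE hr j)) ≤
      Matrix.trace ((G - A * (Aᵀ * G))ᵀ * (G - A * (Aᵀ * G))) := by
  have hAW : Aᵀ * Wp = 0 := by
    have := congrArg Matrix.transpose hWA
    simpa using this
  have hAM : Aᵀ * M = 0 := by
    have := congrArg Matrix.transpose hMA
    simpa using this
  -- Aᵀ G = Aᵀ Ghat
  have hAG : Aᵀ * Ghat = Aᵀ * G := by
    have e1 : Aᵀ * (Wp * (Wpᵀ * G)) = 0 := by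
      rw [← Matrix.mul_assoc, hAW, Matrix.zero_mul]
    have e2 : Aᵀ * (M * (Mᵀ * G)) = 0 := by
      rw [← Matrix.mul_assoc, hAM, Matrix.zero_mul]
    rw [hGhat, Matrix.mul_sub, Matrix.mul_sub, e1, e2, sub_zero, sub_zero]
  have hQQ : Q * Qᵀ = 1 := mul_eq_one_comm.mp hQ
  set B : Matrix (Fin d) (Fin r) ℝ := Qᵀ * A with hBdef
  have hBt : Bᵀ = Aᵀ * Q := by
    rw [hBdef, Matrix.transpose_mul, Matrix.transpose_transpose]
  have hBB : Bᵀ * B = 1 := by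
    rw [hBt, hBdef, Matrix.mul_assoc, ← Matrix.mul_assoc Q, hQQ, Matrix.one_mul, hA]
  set P : Matrix (Fin d) (Fin d) ℝ := B * Bᵀ with hPdef
  have hPsymm : Pᵀ = P := by
    rw [hPdef, Matrix.transpose_mul, Matrix.transpose_transpose]
  have hPP : P * P = P := by
    rw [hPdef, Matrix.mul_assoc, ← Matrix.mul_assoc Bᵀ, hBB, Matrix.one_mul]
  -- s i = P i i
  set s : Fin d → ℝ := fun i => P i i with hsdef
  have h0 : ∀ i, 0 ≤ s i := by
    intro i
    simp only [hsdef, hPdef, Matrix.mul_apply, Matrix.transpose_apply]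
    exact Finset.sum_nonneg (fun j _ => mul_self_nonneg _)
  have h1 : ∀ i, s i ≤ 1 := by
    intro i
    have key : (1 - P) * (1 - P) = 1 - P := by
      have e : (1 - P) * (1 - P) = 1 - P - P + P * P := by noncomm_ring
      rw [e, hPP]
      abel
    have hsymm : (1 - P)ᵀ = 1 - P := by
      rw [Matrix.transpose_sub, Matrix.transpose_one, hPsymm]
    have h2 : 0 ≤ (1 - P) i i := by
      have e : (1 - P) = (1 - P)ᵀ * (1 - P) := by rw [hsymm, key]
      have e2 : (1 - P) i i = ∑ j, (1 - P) j i * (1 - P) j i := by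
        nth_rewrite 1 [e]
        rw [Matrix.mul_apply]
        simp only [Matrix.transpose_apply]
      rw [e2]
      exact Finset.sum_nonneg (fun j _ => mul_self_nonneg _)
    have : (1 - P) i i = 1 - P i i := by simp [Matrix.sub_apply, Matrix.one_apply]
    rw [this] at h2
    simp only [hsdef]
    linarith
  have hsum : ∑ i, s i = (r : ℝ) := by
    have : ∑ i, s i = Matrix.trace P := rfl
    rw [this, hPdef, Matrix.trace_mul_comm, hBB, Matrix.trace_one]
    simp
  -- trace identity: trace((AᵀG)ᵀ(AᵀG)) = ∑ lam i * s i
  have htr : Matrix.trace ((Aᵀ * G)ᵀ * (Aᵀ * G)) = ∑ i, lam i * s i := by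
    have e1 : Matrix.trace ((Aᵀ * G)ᵀ * (Aᵀ * G))
        = Matrix.trace ((Aᵀ * G) * (Aᵀ * G)ᵀ) := Matrix.trace_mul_comm _ _
    have e2 : (Aᵀ * G) * (Aᵀ * G)ᵀ = Aᵀ * (Ghat * Ghatᵀ) * A := by
      rw [← hAG]
      simp only [Matrix.transpose_mul, Matrix.transpose_transpose, Matrix.mul_assoc]
    have e3 : Aᵀ * (Ghat * Ghatᵀ) * A = Bᵀ * (Matrix.diagonal lam) * B := by
      rw [hspec, hBt, hBdef]
      simp only [Matrix.mul_assoc]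
    have e4 : Matrix.trace (Bᵀ * Matrix.diagonal lam * B)
        = Matrix.trace (Matrix.diagonal lam * P) := by
      rw [Matrix.mul_assoc, Matrix.trace_mul_comm Bᵀ, hPdef]
      simp only [Matrix.mul_assoc]
    have e5 : Matrix.trace (Matrix.diagonal lam * P) = ∑ i, lam i * s i := by
      simp only [Matrix.trace, Matrix.diag_apply, Matrix.diagonal_mul, hsdef]
    rw [e1, e2, e3, e4, e5]
  -- expansion of the residual
  have hexp : Matrix.trace ((G - A * (Aᵀ * G))ᵀ * (G - A * (Aᵀ * G)))
      = Matrix.trace (Gᵀ * G) - Matrix.trace ((Aᵀ * G)ᵀ * (Aᵀ * G)) := by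
    have expand : (G - A * (Aᵀ * G))ᵀ * (G - A * (Aᵀ * G))
        = Gᵀ * G - Gᵀ * (A * (Aᵀ * G)) - (A * (Aᵀ * G))ᵀ * G
          + (A * (Aᵀ * G))ᵀ * (A * (Aᵀ * G)) := by
      rw [Matrix.transpose_sub, Matrix.sub_mul, Matrix.mul_sub, Matrix.mul_sub]
      abel
    have t1 : (A * (Aᵀ * G))ᵀ * (A * (Aᵀ * G)) = (Aᵀ * G)ᵀ * (Aᵀ * G) := by
      simp only [Matrix.transpose_mul, Matrix.transpose_transpose, Matrix.mul_assoc]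
      rw [← Matrix.mul_assoc Aᵀ A, hA, Matrix.one_mul]
    have t2 : Matrix.trace (Gᵀ * (A * (Aᵀ * G))) = Matrix.trace ((Aᵀ * G)ᵀ * (Aᵀ * G)) := by
      simp only [Matrix.transpose_mul, Matrix.transpose_transpose, Matrix.mul_assoc]
    have t3 : Matrix.trace ((A * (Aᵀ * G))ᵀ * G) = Matrix.trace ((Aᵀ * G)ᵀ * (Aᵀ * G)) := by
      simp only [Matrix.transpose_mul, Matrix.transpose_transpose, Matrix.mul_assoc]
    rw [expand, Matrix.trace_add, Matrix.trace_sub, Matrix.trace_sub, t1, t2, t3]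
    ring
  rw [hexp]
  have := keeplora_sum_aux hr lam hsort s h0 h1 hsum
  linarith [htr ▸ this]
end

section
/- Let W_p ∈ ℝ^{d × p} and M ∈ ℝ^{d × k} satisfy W_pᵀ·W_p = I_p, Mᵀ·M = I_k, and W_pᵀ·M = 0. Let G ∈ ℝ^{d × n}, define Ĝ = G − W_p·W_pᵀ·G − M·Mᵀ·G, and let λ₁ ≥ λ₂ ≥ … ≥ λ_d be the eigenvalues of the real symmetric matrix Ĝ·Ĝᵀ (counted with multiplicity). Suppose A ∈ ℝ^{d × r} satisfies Aᵀ·A = I_r, W_pᵀ·A = 0, Mᵀ·A = 0, and for each j ∈ {1, …, r} the j-th column a_j of A is an eigenvector of Ĝ·Ĝᵀ with eigenvalue λ_j. Then ‖G − A·Aᵀ·G‖_F² = ‖G‖_F² − (λ₁ + λ₂ + … + λ_r), so such A attains the minimum of the constrained optimization problem of Proposition 2. -/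
open Matrix

/-- Attainment statement of Proposition 2: with `Ĝ = G − W_p·W_pᵀ·G − M·Mᵀ·G` and
`lam 0 ≥ lam 1 ≥ …` the eigenvalues of `Ĝ·Ĝᵀ` (counted with multiplicity, i.e.
`Ĝ·Ĝᵀ = Q * diagonal lam * Qᵀ` for orthogonal `Q`), if the columns of `A` are
orthonormal eigenvectors of `Ĝ·Ĝᵀ` for the `r` largest eigenvalues and satisfy the
orthogonality constraints, then `‖G − A·Aᵀ·G‖_F² = ‖G‖_F² − (lam 0 + ⋯ + lam (r-1))`
(writing `‖X‖_F² = trace (Xᵀ * X)`). -/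
theorem keeplora_residual_attained {d p k n r : ℕ} (hr : r ≤ d)
    (Wp : Matrix (Fin d) (Fin p) ℝ)
    (M : Matrix (Fin d) (Fin k) ℝ)
    (hWp : Wpᵀ * Wp = 1) (hM : Mᵀ * M = 1) (hWM : Wpᵀ * M = 0)
    (G : Matrix (Fin d) (Fin n) ℝ)
    (Ghat : Matrix (Fin d) (Fin n) ℝ)
    (hGhat : Ghat = G - Wp * (Wpᵀ * G) - M * (Mᵀ * G))
    (lam : Fin d → ℝ) (hsort : Antitone lam)
    (Q : Matrix (Fin d) (Fin d) ℝ) (hQ : Qᵀ * Q = 1)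
    (hspec : Ghat * Ghatᵀ = Q * Matrix.diagonal lam * Qᵀ)
    (A : Matrix (Fin d) (Fin r) ℝ) (hA : Aᵀ * A = 1)
    (hWA : Wpᵀ * A = 0) (hMA : Mᵀ * A = 0)
    (hcol : ∀ j : Fin r,
      (Ghat * Ghatᵀ).mulVec (fun i => A i j) =
        lam (Fin.castLE hr j) • (fun i => A i j)) :
    Matrix.trace ((G - A * (Aᵀ * G))ᵀ * (G - A * (Aᵀ * G))) =
      Matrix.trace (Gᵀ * G) - (∑ j : Fin r, lam (Fin.castLE hr j)) := by
  set B := A * (Aᵀ * G) with hB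
  have key : Aᵀ * (A * (Aᵀ * G)) = Aᵀ * G := by
    rw [← Matrix.mul_assoc, hA, Matrix.one_mul]
  have hBtB : Bᵀ * B = Gᵀ * B := by
    simp [hB, Matrix.transpose_mul, Matrix.mul_assoc, key]
  -- Ghatᵀ * A = Gᵀ * A
  have hGA : Ghatᵀ * A = Gᵀ * A := by
    subst hGhat
    simp [Matrix.transpose_sub, Matrix.transpose_mul, Matrix.sub_mul,
      Matrix.mul_assoc, hWA, hMA]
  have hAG : Aᵀ * G = Aᵀ * Ghat := by
    have := congrArg Matrix.transpose hGA
    simpa [Matrix.transpose_mul] using this.symm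
  -- trace (Gᵀ * B) = ∑ λ
  have htr : Matrix.trace (Gᵀ * B) = ∑ j : Fin r, lam (Fin.castLE hr j) := by
    have h1 : Matrix.trace (Gᵀ * B) = Matrix.trace (Aᵀ * ((Ghat * Ghatᵀ) * A)) := by
      rw [hB, Matrix.trace_mul_comm, Matrix.mul_assoc, Matrix.trace_mul_comm]
      rw [← Matrix.mul_assoc, hAG, Matrix.mul_assoc (Aᵀ * Ghat), ← hGA,
        ← Matrix.mul_assoc, Matrix.mul_assoc Aᵀ]
    rw [h1]
    have hC : ∀ i j, ((Ghat * Ghatᵀ) * A) i j = lam (Fin.castLE hr j) * A i j := by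
      intro i j
      have := congrFun (hcol j) i
      simpa [Matrix.mulVec, dotProduct, Matrix.mul_apply] using this
    have hAA : ∀ j : Fin r, (∑ i, A i j * A i j) = 1 := by
      intro j
      have := congrFun (congrFun hA j) j
      simpa [Matrix.mul_apply, Matrix.one_apply] using this
    calc Matrix.trace (Aᵀ * ((Ghat * Ghatᵀ) * A))
        = ∑ j : Fin r, ∑ i, A i j * ((Ghat * Ghatᵀ) * A) i j := by
          simp [Matrix.trace, Matrix.diag, Matrix.mul_apply]
      _ = ∑ j : Fin r, lam (Fin.castLE hr j) * ∑ i, A i j * A i j := by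
          refine Finset.sum_congr rfl fun j _ => ?_
          rw [Finset.mul_sum]
          refine Finset.sum_congr rfl fun i _ => ?_
          rw [hC i j]; ring
      _ = ∑ j : Fin r, lam (Fin.castLE hr j) := by
          refine Finset.sum_congr rfl fun j _ => ?_
          rw [hAA j, mul_one]
  have expand : Matrix.trace ((G - B)ᵀ * (G - B)) =
      Matrix.trace (Gᵀ * G) - Matrix.trace (Gᵀ * B) := by
    have hBtG : Matrix.trace (Bᵀ * G) = Matrix.trace (Gᵀ * B) := by
      rw [← Matrix.trace_transpose (Bᵀ * G), Matrix.transpose_mul,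
        Matrix.transpose_transpose]
    rw [Matrix.transpose_sub, Matrix.sub_mul, Matrix.mul_sub, Matrix.mul_sub,
      Matrix.trace_sub, Matrix.trace_sub, Matrix.trace_sub, hBtB, hBtG]
    ring
  rw [expand, htr]
end
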